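/- arXiv:2409.16034 — 3 statements merged into one kernel-verified Lean document; each statement's English description precedes it below -/
import Mathlib

section
/- Let $\{P_n\}$ be a monic polynomial set generated by $A(t)F(xtA(t)-R(t))=\sum_{n\ge0}\alpha_n P_n(x)t^n$ where $F(t)=\sum_{n\ge0}\alpha_n t^n$ with all $\alpha_n\neq 0$, $F(0)=A(0)=1$, $R(0)=0$. Write $A'(t)/A(t)=\sum_{n\ge0}S_n t^n$ and $R'(t)/A(t)=\sum_{n\ge0}R_n t^n$. Then for all $n\ge 1$: $\alpha_n x P_n'(x) - n\alpha_n P_n(x) = -\sum_{k=0}^{n-1} S_k \alpha_{n-k-1}[xP'_{n-k-1}(x)+P_{n-k-1}(x)] + \sum_{k=0}^{n-1} R_k \alpha_{n-k} P'_{n-k}(x)$. -/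
open Finset

/-- Formal composition `F ∘ u`, valid when `u` has zero constant term. -/
noncomputable def pscomp (F u : PowerSeries ℝ) : PowerSeries ℝ :=
  PowerSeries.mk fun m => ∑ n ∈ Finset.range (m + 1),
    (PowerSeries.coeff n F) * (PowerSeries.coeff m (u ^ n))

/-!
Treat `x` as the variable of `ℝ[X]`: the generating function `G = A(t) F(x t A(t) - R(t))`
becomes a power series in `t` over `ℝ[X]`, on which `∂ₓ` acts coefficientwise and `∂ₜ` is the
formal derivative. Both derivations obey the chain rule `∂(F ∘ u) = (F' ∘ u) ∂u` (it holds for the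
polynomial truncations of `F`, and each coefficient only sees a truncation). Hence
`∂ₓG = t A² (F' ∘ u)` and `∂ₜG = A' (F ∘ u) + A (F' ∘ u) (x A + x t A' - R')`; eliminating
`F' ∘ u` with `A' = S A` and `R' = Rc A` gives
`x ∂ₓG - t ∂ₜG = -t S (G + x ∂ₓG) + Rc ∂ₓG`,
whose coefficient of `tⁿ`, evaluated at `x`, is the recurrence (the `P₀'` term vanishes).
-/

namespace PowerSeries

variable {R Q : Type*} [CommRing R] [CommRing Q] [Algebra R Q]

noncomputable def mapDerivation (D : Derivation R Q Q) : Derivation R Q⟦X⟧ Q⟦X⟧ where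
  toFun f := mk fun n => D (coeff n f)
  map_add' f g := by ext n; simp
  map_smul' r f := by ext n; simp
  map_one_eq_zero' := by ext n; simp [coeff_one, apply_ite D]
  leibniz' f g := by
    ext n
    simp only [LinearMap.coe_mk, AddHom.coe_mk, coeff_mk, coeff_mul, map_sum, Derivation.leibniz,
      smul_eq_mul, sum_add_distrib, map_add]
    rw [← Nat.sum_antidiagonal_swap (f := fun p => coeff p.1 g * D (coeff p.2 f))]
    rfl

@[simp]
lemma coeff_mapDerivation (D : Derivation R Q Q) (f : Q⟦X⟧) (n : ℕ) :
    coeff n (mapDerivation D f) = D (coeff n f) :=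
  coeff_mk n fun n => D (coeff n f)

lemma mapDerivation_C (D : Derivation R Q Q) (q : Q) : mapDerivation D (C q) = C (D q) := by
  ext n
  simp [coeff_C, apply_ite D]

lemma mapDerivation_X (D : Derivation R Q Q) : mapDerivation D X = 0 := by
  ext n
  simp [coeff_X, apply_ite D]

lemma mapDerivation_map_algebraMap (D : Derivation R Q Q) (g : R⟦X⟧) :
    mapDerivation D (map (algebraMap R Q) g) = 0 := by
  ext n
  simp

lemma coeff_mapDerivation_congr (D : Derivation R Q Q) (m : ℕ) (v w : Q⟦X⟧)
    (h : ∀ j ≤ m + 1, coeff j v = coeff j w) :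
    coeff m (mapDerivation D v) = coeff m (mapDerivation D w) := by
  simp only [coeff_mapDerivation, h m m.le_succ]

lemma coeff_derivative_congr (m : ℕ) (v w : Q⟦X⟧) (h : ∀ j ≤ m + 1, coeff j v = coeff j w) :
    coeff m (d⁄dX Q v) = coeff m (d⁄dX Q w) := by
  simp only [coeff_derivative, h (m + 1) le_rfl]

lemma derivative_eq_mk (f : Q⟦X⟧) : d⁄dX Q f = mk fun n => ((n : Q) + 1) * coeff (n + 1) f := by
  ext n
  rw [coeff_derivative, coeff_mk, mul_comm]

lemma map_derivative {S : Type*} [CommRing S] (φ : Q →+* S) (f : Q⟦X⟧) :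
    map φ (d⁄dX Q f) = d⁄dX S (map φ f) := by
  ext n
  simp [coeff_derivative]

lemma constantCoeff_map {S : Type*} [CommRing S] (φ : Q →+* S) (f : Q⟦X⟧) :
    constantCoeff (map φ f) = φ (constantCoeff f) :=
  MvPowerSeries.constantCoeff_map φ f

/-- `pscomp` is the case `R = Q = ℝ`. Keeping the coefficients of `F` in `R` lets every
`R`-derivation of `Q⟦X⟧` treat them as constants. -/
noncomputable def comp (F : R⟦X⟧) (u : Q⟦X⟧) : Q⟦X⟧ :=
  mk fun m => ∑ n ∈ range (m + 1), coeff n F • coeff m (u ^ n)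

lemma coeff_pow_of_lt {u : Q⟦X⟧} (hu : constantCoeff u = 0) {m n : ℕ} (h : m < n) :
    coeff m (u ^ n) = 0 :=
  X_pow_dvd_iff.1 (pow_dvd_pow_of_dvd (X_dvd_iff.2 hu) n) m h

lemma coeff_comp_eq_coeff_aeval_trunc (F : R⟦X⟧) {u : Q⟦X⟧} (hu : constantCoeff u = 0)
    {m N : ℕ} (hm : m < N) :
    coeff m (comp F u) = coeff m (Polynomial.aeval u (trunc N F)) := by
  rw [Polynomial.aeval_def, eval₂_trunc_eq_sum_range, map_sum, comp, coeff_mk]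
  simp only [← Algebra.smul_def, coeff_smul]
  refine sum_subset (range_subset_range.2 hm) fun n hn hn' => ?_
  rw [coeff_pow_of_lt hu (by simp_all), smul_zero]

lemma comp_map_algebraMap (F : R⟦X⟧) (u : Q⟦X⟧) :
    comp (map (algebraMap R Q) F) u = comp F u := by
  ext m
  simp only [comp, coeff_mk, coeff_map, Algebra.smul_def, Algebra.algebraMap_self,
    RingHom.id_apply]

lemma map_algHom_comp {Q' : Type*} [CommRing Q'] [Algebra R Q'] (φ : Q →ₐ[R] Q') (F : R⟦X⟧)
    (u : Q⟦X⟧) : map (φ : Q →+* Q') (comp F u) = comp F (map (φ : Q →+* Q') u) := by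
  ext m
  simp only [comp, coeff_map, coeff_mk, map_sum, ← map_pow]
  exact sum_congr rfl fun n _ => map_smul φ _ _

theorem derivation_comp (d : Derivation R Q⟦X⟧ Q⟦X⟧)
    (hd : ∀ m v w, (∀ j ≤ m + 1, coeff j v = coeff j w) → coeff m (d v) = coeff m (d w))
    (F : R⟦X⟧) {u : Q⟦X⟧} (hu : constantCoeff u = 0) :
    d (comp F u) = comp (d⁄dX R F) u * d u := by
  ext m
  calc coeff m (d (comp F u))
      = coeff m (d (Polynomial.aeval u (trunc (m + 2) F))) :=
        hd m _ _ fun j hj => coeff_comp_eq_coeff_aeval_trunc F hu (by omega)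
    _ = coeff m (Polynomial.aeval u (trunc (m + 1) (d⁄dX R F)) * d u) := by
        rw [Derivation.comp_aeval_eq, trunc_derivative, smul_eq_mul]
    _ = coeff m (comp (d⁄dX R F) u * d u) := by
        rw [coeff_mul_eq_coeff_trunc_mul_trunc _ _ (lt_add_one m),
          coeff_mul_eq_coeff_trunc_mul_trunc (comp _ u) _ (lt_add_one m)]
        congr 3
        ext j
        simp only [coeff_trunc]
        split_ifs with hj
        exacts [(coeff_comp_eq_coeff_aeval_trunc _ hu hj).symm, rfl]

theorem derivative_comp (F : R⟦X⟧) {u : Q⟦X⟧} (hu : constantCoeff u = 0) :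
    d⁄dX Q (comp F u) = comp (d⁄dX R F) u * d⁄dX Q u := by
  rw [← comp_map_algebraMap F, derivation_comp _ coeff_derivative_congr _ hu, ← map_derivative,
    comp_map_algebraMap]

end PowerSeries

open PowerSeries
open scoped Polynomial

local notation "∂ₓ" => mapDerivation (Polynomial.derivative' : Derivation ℝ ℝ[X] ℝ[X])

theorem generating_function_pde {R Q : Type*} [CommRing R] [CommRing Q] [Algebra R Q]
    (D : Derivation R Q⟦X⟧ Q⟦X⟧) {x a r s ρ Φ Φ' : Q⟦X⟧}
    (hx : D x = 1) (hX : D X = 0) (ha : D a = 0) (hr : D r = 0)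
    (hx' : d⁄dX Q x = 0) (ha' : d⁄dX Q a = s * a) (hr' : d⁄dX Q r = ρ * a)
    (hΦ : D Φ = Φ' * D (x * X * a - r)) (hΦ' : d⁄dX Q Φ = Φ' * d⁄dX Q (x * X * a - r)) :
    x * D (a * Φ) - X * d⁄dX Q (a * Φ)
      = -(X * (s * (a * Φ + x * D (a * Φ)))) + ρ * D (a * Φ) := by
  simp only [Derivation.leibniz, map_sub, smul_eq_mul, hΦ, hΦ', hx, hX, ha, hr, hx', derivative_X,
    ha', hr']
  ring

/-- `A(t) F(x t A(t) - R(t))`, with `x` the variable of `ℝ[X]` and `t` that of the power series. -/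
noncomputable def generatingSeries (A F R : ℝ⟦X⟧) : ℝ[X]⟦X⟧ :=
  map (algebraMap ℝ ℝ[X]) A
    * comp F (C Polynomial.X * X * map (algebraMap ℝ ℝ[X]) A - map (algebraMap ℝ ℝ[X]) R)

theorem generatingSeries_pde {A F R : ℝ⟦X⟧} {S Rc : ℕ → ℝ} (hR0 : constantCoeff R = 0)
    (hS : PowerSeries.mk S * A = PowerSeries.mk fun n => ((n : ℝ) + 1) * coeff (n + 1) A)
    (hR : PowerSeries.mk Rc * A = PowerSeries.mk fun n => ((n : ℝ) + 1) * coeff (n + 1) R) :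
    C Polynomial.X * ∂ₓ (generatingSeries A F R) - X * d⁄dX ℝ[X] (generatingSeries A F R)
      = -(X * (map (algebraMap ℝ ℝ[X]) (PowerSeries.mk S)
          * (generatingSeries A F R + C Polynomial.X * ∂ₓ (generatingSeries A F R))))
        + map (algebraMap ℝ ℝ[X]) (PowerSeries.mk Rc) * ∂ₓ (generatingSeries A F R) := by
  have hu : constantCoeff (C Polynomial.X * X * map (algebraMap ℝ ℝ[X]) A
      - map (algebraMap ℝ ℝ[X]) R) = 0 := by
    simp [constantCoeff_map, hR0]
  have hmap : ∀ g, d⁄dX ℝ[X] (map (algebraMap ℝ ℝ[X]) g) = map _ (d⁄dX ℝ g) :=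
    fun g => (map_derivative _ g).symm
  exact generating_function_pde ∂ₓ (by simp [mapDerivation_C]) (mapDerivation_X _)
    (mapDerivation_map_algebraMap _ _) (mapDerivation_map_algebraMap _ _) (derivative_C ..)
    (by rw [hmap, derivative_eq_mk, ← hS, map_mul]) (by rw [hmap, derivative_eq_mk, ← hR, map_mul])
    (derivation_comp ∂ₓ (coeff_mapDerivation_congr _) F hu) (derivative_comp F hu)

lemma map_evalRingHom_map_algebraMap (x : ℝ) (g : ℝ⟦X⟧) :
    map (Polynomial.evalRingHom x) (map (algebraMap ℝ ℝ[X]) g) = g := by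
  ext n
  simp [coeff_map]

lemma map_evalRingHom_generatingSeries (A F R : ℝ⟦X⟧) (x : ℝ) :
    map (Polynomial.evalRingHom x) (generatingSeries A F R) = A * pscomp F (C x * X * A - R) := by
  rw [generatingSeries, map_mul, ← Polynomial.coe_aeval_eq_evalRingHom, map_algHom_comp,
    Polynomial.coe_aeval_eq_evalRingHom]
  simp only [map_sub, map_mul, map_C, map_X, map_evalRingHom_map_algebraMap,
    Polynomial.coe_evalRingHom, Polynomial.eval_X]
  rfl

lemma coeff_generatingSeries {A F R : ℝ⟦X⟧} {α : ℕ → ℝ} {P : ℕ → ℝ[X]}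
    (hGF : ∀ x : ℝ, A * pscomp F (C x * X * A - R) = PowerSeries.mk fun n => α n * (P n).eval x)
    (n : ℕ) : coeff n (generatingSeries A F R) = Polynomial.C (α n) * P n :=
  Polynomial.funext fun x => by
    rw [← Polynomial.coe_evalRingHom, ← coeff_map, map_evalRingHom_generatingSeries, hGF]
    simp

theorem recurrence_of_series_identity (x : ℝ) (α p q S Rc : ℕ → ℝ) (hq0 : q 0 = 0)
    (h : C x * PowerSeries.mk (fun n => α n * q n) - X * d⁄dX ℝ (PowerSeries.mk fun n => α n * p n)
      = -(X * (PowerSeries.mk S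
          * (PowerSeries.mk (fun n => α n * p n) + C x * PowerSeries.mk fun n => α n * q n)))
        + PowerSeries.mk Rc * PowerSeries.mk fun n => α n * q n)
    (n : ℕ) (hn : 1 ≤ n) :
    α n * x * q n - n * α n * p n
      = -(∑ k ∈ range n, S k * α (n - k - 1) * (x * q (n - k - 1) + p (n - k - 1)))
        + ∑ k ∈ range n, Rc k * α (n - k) * q (n - k) := by
  obtain ⟨m, rfl⟩ : ∃ m, n = m + 1 := ⟨n - 1, by omega⟩
  have hm := congrArg (coeff (m + 1)) h
  simp only [← smul_eq_C_mul, map_sub, map_neg, map_add, coeff_smul, coeff_succ_X_mul,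
    coeff_derivative] at hm
  simp only [coeff_mul, Nat.sum_antidiagonal_eq_sum_range_succ_mk, map_add, coeff_smul, coeff_mk,
    smul_eq_mul] at hm
  rw [sum_range_succ (fun k => Rc k * _), Nat.sub_self, hq0] at hm
  simp only [mul_zero, add_zero, Nat.succ_eq_add_one] at hm
  have hS : ∀ k ∈ range (m + 1),
      S k * α (m + 1 - k - 1) * (x * q (m + 1 - k - 1) + p (m + 1 - k - 1))
        = S k * (α (m - k) * p (m - k) + x * (α (m - k) * q (m - k))) := fun k _ => by
    rw [show m + 1 - k - 1 = m - k by omega]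
    ring
  simp_rw [sum_congr rfl hS, mul_assoc (Rc _)]
  push_cast
  linear_combination hm

theorem stmt0_general
    (A F R : PowerSeries ℝ) (α : ℕ → ℝ) (P : ℕ → Polynomial ℝ) (S Rc : ℕ → ℝ)
    (hR0 : PowerSeries.constantCoeff R = 0)
    (hP : ∀ n, (P n).Monic ∧ (P n).natDegree = n)
    -- `A'(t)/A(t) = ∑ S_n t^n`, encoded as `(∑ S_n t^n) * A = A'`
    (hS : PowerSeries.mk S * A
      = PowerSeries.mk fun n => ((n : ℝ) + 1) * PowerSeries.coeff (n + 1) A)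
    -- `R'(t)/A(t) = ∑ R_n t^n`, encoded as `(∑ R_n t^n) * A = R'`
    (hR : PowerSeries.mk Rc * A
      = PowerSeries.mk fun n => ((n : ℝ) + 1) * PowerSeries.coeff (n + 1) R)
    -- the generating function identity `A(t) F(x t A(t) - R(t)) = ∑ α_n P_n(x) t^n`
    (hGF : ∀ x : ℝ, A * pscomp F (PowerSeries.C x * PowerSeries.X * A - R)
      = PowerSeries.mk fun n => α n * (P n).eval x) :
    ∀ n : ℕ, 1 ≤ n → ∀ x : ℝ,
      α n * x * (Polynomial.derivative (P n)).eval x - (n : ℝ) * α n * (P n).eval x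
        = -(∑ k ∈ Finset.range n, S k * α (n - k - 1) *
              (x * (Polynomial.derivative (P (n - k - 1))).eval x + (P (n - k - 1)).eval x))
          + ∑ k ∈ Finset.range n, Rc k * α (n - k) *
              (Polynomial.derivative (P (n - k))).eval x := by
  intro n hn x
  have hG := coeff_generatingSeries hGF
  have hGx : map (Polynomial.evalRingHom x) (generatingSeries A F R)
      = PowerSeries.mk fun n => α n * (P n).eval x := by
    ext n
    rw [coeff_map, hG, coeff_mk]
    simp
  have hDGx : map (Polynomial.evalRingHom x) (∂ₓ (generatingSeries A F R))
      = PowerSeries.mk fun n => α n * (P n).derivative.eval x := by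
    ext n
    rw [coeff_map, coeff_mapDerivation, hG, coeff_mk]
    simp
  have h := congrArg (map (Polynomial.evalRingHom x)) (generatingSeries_pde (F := F) hR0 hS hR)
  simp only [map_sub, map_mul, map_add, map_neg, map_C, map_X, map_derivative, hGx, hDGx,
    map_evalRingHom_map_algebraMap, Polynomial.coe_evalRingHom, Polynomial.eval_X] at h
  have hq0 : (P 0).derivative.eval x = 0 := by
    rw [Polynomial.derivative_of_natDegree_zero (hP 0).2, Polynomial.eval_zero]
  exact recurrence_of_series_identity x α _ _ S Rc hq0 h n hn

theorem stmt0
    (A F R : PowerSeries ℝ) (α : ℕ → ℝ) (P : ℕ → Polynomial ℝ) (S Rc : ℕ → ℝ)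
    (hA0 : PowerSeries.constantCoeff A = 1)
    (hR0 : PowerSeries.constantCoeff R = 0)
    (hF : F = PowerSeries.mk α)
    (hF0 : α 0 = 1)
    (hα : ∀ n, α n ≠ 0)
    (hP : ∀ n, (P n).Monic ∧ (P n).natDegree = n)
    -- `A'(t)/A(t) = ∑ S_n t^n`, encoded as `(∑ S_n t^n) * A = A'`
    (hS : PowerSeries.mk S * A
      = PowerSeries.mk fun n => ((n : ℝ) + 1) * PowerSeries.coeff (n + 1) A)
    -- `R'(t)/A(t) = ∑ R_n t^n`, encoded as `(∑ R_n t^n) * A = R'`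
    (hR : PowerSeries.mk Rc * A
      = PowerSeries.mk fun n => ((n : ℝ) + 1) * PowerSeries.coeff (n + 1) R)
    -- the generating function identity `A(t) F(x t A(t) - R(t)) = ∑ α_n P_n(x) t^n`
    (hGF : ∀ x : ℝ, A * pscomp F (PowerSeries.C x * PowerSeries.X * A - R)
      = PowerSeries.mk fun n => α n * (P n).eval x) :
    ∀ n : ℕ, 1 ≤ n → ∀ x : ℝ,
      α n * x * (Polynomial.derivative (P n)).eval x - (n : ℝ) * α n * (P n).eval x
        = -(∑ k ∈ Finset.range n, S k * α (n - k - 1) *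
              (x * (Polynomial.derivative (P (n - k - 1))).eval x + (P (n - k - 1)).eval x))
          + ∑ k ∈ Finset.range n, Rc k * α (n - k) *
              (Polynomial.derivative (P (n - k))).eval x :=
  stmt0_general A F R α P S Rc hR0 hP hS hR hGF
end

section
/- For any scalar $\rho$, the bilateral generating function $\sum_{n\ge 0}2^n U_n(\rho)\,U_n(x)\,t^n=\dfrac{4-t^2}{4-8\rho xt+(4\rho^2+4x^2-2)t^2-2\rho x t^3+\tfrac{t^4}{4}}$ holds as a formal power series identity in $t$. -/
/-!
Let `b n = 2ⁿ Uₙ(ρ) Uₙ(x)`. Since `2ⁿ Uₙ(y) = (αⁿ⁺¹ - α⁻ⁿ⁻¹) / (α - α⁻¹)` with `α + α⁻¹ = 2y`,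
the sequence `b` is a combination of the four geometric sequences with ratios
`r = α_ρ^{±1} α_x^{±1} / 2`, and the denominator is `4 ∏ (1 - r t)`. Hence `b` satisfies the
order-four recurrence read off from the denominator (checked directly by reducing everything to
`Uₙ` and `Uₙ₊₁`), so the series times the denominator is a polynomial of degree `< 4`, which the
values `b 0, …, b 3` identify as `4 - t²`.
-/

open PowerSeries

noncomputable def chebU : ℕ → Polynomial ℝ
  | 0 => 1
  | 1 => Polynomial.X
  | (n + 2) => Polynomial.X * chebU (n + 1) - Polynomial.C (1/4 : ℝ) * chebU n

theorem PowerSeries.coeff_mul_C_mul_X_pow' {R : Type*} [CommSemiring R] (f : R⟦X⟧) (c : R)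
    (k n : ℕ) :
    coeff n (f * (C c * X ^ k)) = if k ≤ n then c * coeff (n - k) f else 0 := by
  rw [mul_left_comm, coeff_C_mul, coeff_mul_X_pow']
  split_ifs <;> simp

theorem PowerSeries.coeff_mul_C_mul_X' {R : Type*} [CommSemiring R] (f : R⟦X⟧) (c : R)
    (n : ℕ) :
    coeff n (f * (C c * X)) = if 1 ≤ n then c * coeff (n - 1) f else 0 := by
  simpa using coeff_mul_C_mul_X_pow' f c 1 n

noncomputable def bilateralChebU (ρ x : ℝ) (n : ℕ) : ℝ :=
  2 ^ n * (chebU n).eval ρ * (chebU n).eval x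

theorem bilateralChebU_recurrence (ρ x : ℝ) (n : ℕ) :
    4 * bilateralChebU ρ x (n + 4) - 8 * ρ * x * bilateralChebU ρ x (n + 3)
      + (4 * ρ ^ 2 + 4 * x ^ 2 - 2) * bilateralChebU ρ x (n + 2)
      - 2 * ρ * x * bilateralChebU ρ x (n + 1) + 1 / 4 * bilateralChebU ρ x n = 0 := by
  simp only [bilateralChebU, chebU, Polynomial.eval_sub, Polynomial.eval_mul, Polynomial.eval_X,
    Polynomial.eval_C]
  ring

/-- Bilateral generating function
`∑ 2ⁿ U_n(ρ) U_n(x) tⁿ = (4 - t²)/(4 - 8ρxt + (4ρ² + 4x² - 2)t² - 2ρxt³ + t⁴/4)`. -/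
theorem stmt7 (ρ x : ℝ) :
    (PowerSeries.mk fun n => (2 : ℝ) ^ n * (chebU n).eval ρ * (chebU n).eval x)
      = (PowerSeries.C (R := ℝ) 4 - PowerSeries.X ^ 2) *
          (PowerSeries.C (R := ℝ) 4 - PowerSeries.C (R := ℝ) (8 * ρ * x) * PowerSeries.X
            + PowerSeries.C (R := ℝ) (4 * ρ ^ 2 + 4 * x ^ 2 - 2) * PowerSeries.X ^ 2
            - PowerSeries.C (R := ℝ) (2 * ρ * x) * PowerSeries.X ^ 3
            + PowerSeries.C (R := ℝ) (1/4) * PowerSeries.X ^ 4)⁻¹ := by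
  rw [eq_mul_inv_iff_mul_eq (by simp)]
  change mk (bilateralChebU ρ x) * _ = _
  ext n
  simp only [mul_add, mul_sub, LinearMap.map_add, LinearMap.map_sub, coeff_mul_C_mul_X_pow',
    coeff_mul_C_mul_X', coeff_mul_C, coeff_mk, coeff_C, coeff_X_pow]
  match n with
  | 0 | 1 | 2 | 3 =>
    norm_num [bilateralChebU, chebU] <;> ring
  | n + 4 =>
    simp only [le_add_iff_nonneg_left, zero_le, ↓reduceIte, Nat.add_one_sub_one,
      show n + 4 - 2 = n + 2 by omega, show n + 4 - 3 = n + 1 by omega, add_tsub_cancel_right,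
      Nat.add_eq_zero_iff, OfNat.ofNat_ne_zero, and_false, Nat.reduceEqDiff, sub_self]
    linear_combination bilateralChebU_recurrence ρ x n
end

section
/- For any scalar $\rho$, $\sum_{n\ge 1}2^n U_{n-1}(\rho)\,U_n(x)\,t^n=\dfrac{4(2xt-\rho t^2)}{4-8\rho xt+(4\rho^2+4x^2-2)t^2-2\rho x t^3+\tfrac{t^4}{4}}$ as formal power series in $t$. -/
/-!
The sequences `U_{n-1}(ρ)` and `U_n(x)` satisfy three-term recurrences, so `2ⁿ U_{n-1}(ρ) U_n(x)`
satisfies the fourth-order recurrence whose characteristic roots are the products of theirs (times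
`2`). The reversed characteristic polynomial of that recurrence is the denominator, so multiplying
the series by it kills every coefficient from `t⁴` on, and the first four coefficients give the
numerator.
-/

open Finset

section Recurrence

variable {R : Type*} [CommRing R]

theorem pow_mul_recurrence {u : ℕ → R} {a c : R} (s : R)
    (hu : ∀ n, u (n + 2) = a * u (n + 1) - c * u n) (n : ℕ) :
    s ^ (n + 2) * u (n + 2) = s * a * (s ^ (n + 1) * u (n + 1)) - s ^ 2 * c * (s ^ n * u n) := by
  rw [hu]; ring

/-- If `u` and `v` have characteristic roots `α₁, α₂` and `β₁, β₂`, then `u * v` satisfies the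
recurrence whose characteristic roots are the four products `αᵢ βⱼ`. -/
theorem mul_recurrence {u v : ℕ → R} {a b c d : R}
    (hu : ∀ n, u (n + 2) = a * u (n + 1) - c * u n)
    (hv : ∀ n, v (n + 2) = b * v (n + 1) - d * v n) (n : ℕ) :
    u (n + 4) * v (n + 4) - a * b * (u (n + 3) * v (n + 3))
      + (a ^ 2 * d + b ^ 2 * c - 2 * c * d) * (u (n + 2) * v (n + 2))
      - a * b * c * d * (u (n + 1) * v (n + 1)) + c ^ 2 * d ^ 2 * (u n * v n) = 0 := by
  rw [hu (n + 2), hv (n + 2), hu (n + 1), hv (n + 1), hu n, hv n]; ring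

end Recurrence

namespace PowerSeries

theorem mk_mul_quartic_of_recurrence {R : Type*} [CommRing R] (a : ℕ → R) (q₀ q₁ q₂ q₃ q₄ : R)
    (ha : ∀ n, q₀ * a (n + 4) - q₁ * a (n + 3) + q₂ * a (n + 2) - q₃ * a (n + 1) + q₄ * a n = 0) :
    mk a * (C q₀ - C q₁ * X + C q₂ * X ^ 2 - C q₃ * X ^ 3 + C q₄ * X ^ 4)
      = C (q₀ * a 0) + C (q₀ * a 1 - q₁ * a 0) * X + C (q₀ * a 2 - q₁ * a 1 + q₂ * a 0) * X ^ 2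
        + C (q₀ * a 3 - q₁ * a 2 + q₂ * a 1 - q₃ * a 0) * X ^ 3 := by
  ext n
  simp only [mul_add, mul_sub, ← mul_assoc, map_add, map_sub]
  rcases n with _ | _ | _ | _ | n <;> simp [coeff_mul_X_pow']
  iterate 4 ring
  linear_combination ha n

end PowerSeries

/-- `chebUShift y n = U_{n-1}(y)`, with `U_{-1} = 0` so that the three-term recurrence holds
from `n = 0` on. -/
noncomputable def chebUShift (y : ℝ) : ℕ → ℝ
  | 0 => 0
  | n + 1 => (chebU n).eval y

theorem chebUShift_add_two (y : ℝ) (n : ℕ) :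
    chebUShift y (n + 2) = y * chebUShift y (n + 1) - 1 / 4 * chebUShift y n := by
  rcases n with _ | n <;> simp [chebUShift, chebU]

noncomputable def chebUProdCoeff (ρ x : ℝ) (n : ℕ) : ℝ :=
  2 ^ n * chebUShift ρ n * chebUShift x (n + 1)

theorem chebUProdCoeff_recurrence (ρ x : ℝ) (n : ℕ) :
    4 * chebUProdCoeff ρ x (n + 4) - 8 * ρ * x * chebUProdCoeff ρ x (n + 3)
      + (4 * ρ ^ 2 + 4 * x ^ 2 - 2) * chebUProdCoeff ρ x (n + 2)
      - 2 * ρ * x * chebUProdCoeff ρ x (n + 1) + 1 / 4 * chebUProdCoeff ρ x n = 0 := by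
  have h := mul_recurrence (u := fun n => 2 ^ n * chebUShift ρ n)
    (v := fun n => chebUShift x (n + 1)) (pow_mul_recurrence 2 (chebUShift_add_two ρ))
    (fun n => chebUShift_add_two x (n + 1)) n
  simp only [chebUProdCoeff]
  linear_combination 4 * h

/-- `∑_{n≥1} 2ⁿ U_{n-1}(ρ) U_n(x) tⁿ
  = 4(2xt - ρt²)/(4 - 8ρxt + (4ρ² + 4x² - 2)t² - 2ρxt³ + t⁴/4)`. -/
theorem stmt8 (ρ x : ℝ) :
    (PowerSeries.mk fun n =>
        if n = 0 then 0 else (2 : ℝ) ^ n * (chebU (n - 1)).eval ρ * (chebU n).eval x)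
      = (PowerSeries.C (R := ℝ) (8 * x) * PowerSeries.X - PowerSeries.C (R := ℝ) (4 * ρ) * PowerSeries.X ^ 2) *
          (PowerSeries.C (R := ℝ) 4 - PowerSeries.C (R := ℝ) (8 * ρ * x) * PowerSeries.X
            + PowerSeries.C (R := ℝ) (4 * ρ ^ 2 + 4 * x ^ 2 - 2) * PowerSeries.X ^ 2
            - PowerSeries.C (R := ℝ) (2 * ρ * x) * PowerSeries.X ^ 3
            + PowerSeries.C (R := ℝ) (1/4) * PowerSeries.X ^ 4)⁻¹ := by
  have hcoeff :
      (fun n => if n = 0 then 0 else (2 : ℝ) ^ n * (chebU (n - 1)).eval ρ * (chebU n).eval x)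
        = chebUProdCoeff ρ x := by
    funext n; rcases n with _ | n <;> simp [chebUProdCoeff, chebUShift]
  rw [PowerSeries.eq_mul_inv_iff_mul_eq (by simp), hcoeff,
    PowerSeries.mk_mul_quartic_of_recurrence _ _ _ _ _ _ (chebUProdCoeff_recurrence ρ x)]
  open PowerSeries in
  suffices ∀ c₀ c₁ c₂ c₃ : ℝ, c₀ = 0 → c₁ = 8 * x → c₂ = -(4 * ρ) → c₃ = 0 →
      C c₀ + C c₁ * X + C c₂ * X ^ 2 + C c₃ * X ^ 3 = C (8 * x) * X - C (4 * ρ) * X ^ 2 by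
    apply this <;> simp [chebUProdCoeff, chebUShift, chebU] <;> ring
  rintro _ _ _ _ rfl rfl rfl rfl
  simp only [map_zero, map_neg, zero_mul, zero_add, add_zero, neg_mul]
  ring
end
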